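/- (i) For every 1 ≤ i ≤ n and b ∈ P, one has the cross-relation s_i ∘ 𝒟_b − 𝒟_{s_i(b)} ∘ s_i = −k_{α_i}·(b, α_i)·id as operators on ℂ_k[P]. (ii) Let θ be the highest short root (so (θ,θ) = 2 under the normalization that short roots have squared length 2) and define the operator s_0^x on ℂ_k[P] by s_0^x(f) = X_θ · s_θ(f). Then s_0^x ∘ 𝒟_b − (𝒟_{s_θ(b)} + (b,θ)·id) ∘ s_0^x = k_θ·(b, θ)·id as operators on ℂ_k[P]. -/

import Mathlib

noncomputable section

open scoped RealInnerProductSpace BigOperators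

/-- Euclidean space `ℝ^n`, the ambient space of the root system. -/
abbrev Vn (n : ℕ) := EuclideanSpace ℝ (Fin n)

/-- The coroot `α^∨ = 2α/(α,α)` of a vector `α`. -/
def coroot {n : ℕ} (α : Vn n) : Vn n := (2 / ⟪α, α⟫) • α

/-- The reflection `s_α` applied to `β`: `β − (β, α^∨)·α`. -/
def reflVec {n : ℕ} (α β : Vn n) : Vn n := β - (2 * ⟪β, α⟫ / ⟪α, α⟫) • α

/-- An irreducible reduced crystallographic root system of rank `n` in `ℝ^n`, together
with a fixed base of simple roots `α_1,…,α_n`, the corresponding set of positive roots,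
the fundamental weights `ω_1,…,ω_n` and the highest short root `θ`. -/
structure RootSystemData (n : ℕ) where
  /-- the set of roots -/
  R : Finset (Vn n)
  /-- the set of positive roots -/
  Rplus : Finset (Vn n)
  /-- the simple roots `α_1,…,α_n` -/
  sroot : Fin n → Vn n
  /-- the fundamental weights `ω_1,…,ω_n` -/
  fw : Fin n → Vn n
  /-- the highest short root `θ` -/
  hst : Vn n
  root_ne_zero : ∀ α ∈ R, α ≠ (0 : Vn n)
  span_top : Submodule.span ℝ (R : Set (Vn n)) = ⊤
  reflect_mem : ∀ α ∈ R, ∀ β ∈ R, reflVec α β ∈ R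
  crystallographic : ∀ α ∈ R, ∀ β ∈ R, ∃ z : ℤ, 2 * ⟪β, α⟫ / ⟪α, α⟫ = (z : ℝ)
  reduced : ∀ α ∈ R, ∀ c : ℝ, c • α ∈ R → c = 1 ∨ c = -1
  irreducible : ∀ S : Set (Vn n), (∃ α ∈ R, α ∈ S) →
    (∀ α ∈ R, ∀ β ∈ R, α ∈ S → ⟪α, β⟫ ≠ 0 → β ∈ S) → ∀ β ∈ R, β ∈ S
  sroot_mem : ∀ i, sroot i ∈ Rplus
  pos_sub : Rplus ⊆ R
  pos_or : ∀ α ∈ R, α ∈ Rplus ∨ -α ∈ Rplus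
  pos_not_and : ∀ α ∈ Rplus, -α ∉ Rplus
  pos_decomp : ∀ α ∈ Rplus, ∃ c : Fin n → ℕ, α = ∑ i, (c i : ℝ) • sroot i
  fw_pair : ∀ i j, ⟪fw i, coroot (sroot j)⟫ = if i = j then 1 else 0
  theta_mem : hst ∈ Rplus
  theta_short : ∀ α ∈ R, ⟪hst, hst⟫ ≤ ⟪α, α⟫
  theta_highest : ∀ α ∈ R, ∃ c : Fin n → ℝ, (∀ i, 0 ≤ c i) ∧
    coroot hst - coroot α = ∑ i, c i • coroot (sroot i)

namespace RootSystemData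

variable {n : ℕ} (D : RootSystemData n)

/-- The weight lattice `P = ⊕_i ℤ·ω_i`. -/
def P : Submodule ℤ (Vn n) := Submodule.span ℤ (Set.range D.fw)

/-- `ρ = ω_1 + ⋯ + ω_n` (the half-sum of the positive roots). -/
def rho : Vn n := ∑ i, D.fw i

/-- The Coxeter number `h = 1 + (ρ, θ^∨)`. -/
def h : ℝ := 1 + ⟪D.rho, coroot D.hst⟫

/-- The Weyl group `W`, as the subgroup of `GL(ℝ^n)` generated by the reflections
`s_α`, `α ∈ R`. -/
def Weyl : Subgroup ((Vn n) ≃ₗ[ℝ] (Vn n)) :=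
  Subgroup.closure { w | ∃ α ∈ D.R, ∀ v, w v = reflVec α v }

/-- `ω_r` is a minuscule (fundamental) weight: `(ω_r, α^∨) ≤ 1` for all `α ∈ R_+`. -/
def Minuscule (r : Fin n) : Prop := ∀ α ∈ D.Rplus, ⟪D.fw r, coroot α⟫ ≤ 1

end RootSystemData

/-- The group algebra `ℂ[P]` of the weight lattice. -/
abbrev GA {n : ℕ} (D : RootSystemData n) := AddMonoidAlgebra ℂ ↥D.P

-- The basis element `X_v` of `ℂ[P]` (and `0` if `v ∉ P`; under the hypotheses below
-- only genuine lattice elements occur).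
open Classical in
def XP {n : ℕ} (D : RootSystemData n) (v : Vn n) : GA D :=
  if h : v ∈ D.P then AddMonoidAlgebra.single (⟨v, h⟩ : ↥D.P) 1 else 0

/-- The derivation `∂_b` of `ℂ[P]`: `∂_b(X_c) = (b,c)·X_c`. -/
def der {n : ℕ} (D : RootSystemData n) (b : Vn n) (f : GA D) : GA D :=
  Finsupp.sum f.coeff fun c v => ((⟪b, (c : Vn n)⟫ : ℝ) : ℂ) • AddMonoidAlgebra.single c v

/-- The action of a lattice map `s : P → P` on `ℂ[P]`: `X_b ↦ X_{s(b)}`. -/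
def sOp {n : ℕ} (D : RootSystemData n) (s : ↥D.P → ↥D.P) (f : GA D) : GA D :=
  AddMonoidAlgebra.ofCoeff (Finsupp.mapDomain s f.coeff)

/-- `IsTrigDunkl D k sP b Dop` says that `Dop` is the trigonometric Dunkl operator
`𝒟_b f = ∂_b f + Σ_{α ∈ R_+} k_α (b,α)·(1 − X_α^{−1})^{−1}(f − s_α f) − (ρ_k, b)·f`,
where `(1 − X_α^{−1})^{−1}(f − s_α f)` is encoded by its defining equation and
`(ρ_k, b) = (1/2)Σ_{α ∈ R_+} k_α (α, b)`. -/
def IsTrigDunkl {n : ℕ} (D : RootSystemData n) (k : Vn n → ℂ)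
    (sP : Vn n → ↥D.P → ↥D.P) (b : Vn n) (Dop : GA D → GA D) : Prop :=
  ∀ f : GA D, ∃ g : Vn n → GA D,
    (∀ α ∈ D.Rplus, (1 - XP D (-α)) * g α = f - sOp D (sP α) f) ∧
    Dop f = der D b f + (∑ α ∈ D.Rplus, (k α * ((⟪b, α⟫ : ℝ) : ℂ)) • g α)
      - (((1 / 2 : ℂ) * ∑ α ∈ D.Rplus, k α * ((⟪α, b⟫ : ℝ) : ℂ)) • f)


/-!
Write `𝒟_b f = ∂_b f + Σ_{α ∈ R_+} k_α (b,α) Δ_α f − (ρ_k, b) f`, where the divided difference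
`Δ_α f` is the unique solution of `(1 − X_{−α}) Δ_α f = f − s_α f` (`ℂ[P]` is a domain).
Conjugating by a reflection `s_a` turns `Δ_β` into `Δ_{s_a β}` (as `s_a s_β s_a = s_{s_a β}`) and
`∂_b` into `∂_{s_a b}`, and `Δ_{−β} = 1 − s_β − Δ_β`.

(i) `s_i` permutes `R_+ ∖ {α_i}` and sends `α_i` to `−α_i`; the one defect term, together with
`(ρ_k, b) − (ρ_k, s_i b) = k_{α_i} (b, α_i)`, leaves `−k_{α_i} (b, α_i) f`.

(ii) `X_θ s_θ` commutes with `Δ_γ` for the positive roots `γ ⊥ θ`. The other positive roots are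
permuted by `γ ↦ −s_θ γ`, and since `θ` is the highest short root, `(θ, γ^∨) = 1` for them unless
`γ = θ`; this gives `X_θ s_θ Δ_γ f = X_θ s_θ f − Δ_{−s_θ γ}(X_θ s_θ f)`, plus `f` when `γ = θ`.
Summing, the multiples of `X_θ s_θ f` cancel against
`(ρ_k, b) − (ρ_k, s_θ b) = Σ_{(θ,γ) ≠ 0} k_γ (b, γ)`, and `γ = θ` leaves `k_θ (b, θ) f`.
-/

namespace DegenerateDAHA

section Reflection

variable {n : ℕ}

lemma reflVec_eq_sub_smul_coroot (α v : Vn n) : reflVec α v = v - ⟪v, α⟫ • coroot α := by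
  rw [reflVec, coroot, smul_smul, mul_div_assoc', mul_comm]

def reflLinearMap (α : Vn n) : Vn n →ₗ[ℝ] Vn n :=
  LinearMap.id - (innerₛₗ ℝ (coroot α)).smulRight α

lemma reflLinearMap_apply (α v : Vn n) : reflLinearMap α v = reflVec α v := by
  simp only [reflLinearMap, LinearMap.sub_apply, LinearMap.id_apply, LinearMap.smulRight_apply,
    innerₛₗ_apply_apply, reflVec_eq_sub_smul_coroot, coroot, real_inner_smul_left,
    real_inner_comm α v, smul_smul]
  rw [mul_comm]

lemma reflVec_add (α u v : Vn n) : reflVec α (u + v) = reflVec α u + reflVec α v := by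
  simp only [← reflLinearMap_apply, map_add]

lemma reflVec_sub (α u v : Vn n) : reflVec α (u - v) = reflVec α u - reflVec α v := by
  simp only [← reflLinearMap_apply, map_sub]

lemma reflVec_neg (α v : Vn n) : reflVec α (-v) = -reflVec α v := by
  simp only [← reflLinearMap_apply, map_neg]

lemma reflVec_smul (α : Vn n) (c : ℝ) (v : Vn n) : reflVec α (c • v) = c • reflVec α v := by
  simp only [← reflLinearMap_apply, map_smul]

lemma reflVec_neg_left (α v : Vn n) : reflVec (-α) v = reflVec α v := by
  simp only [reflVec, inner_neg_right, inner_neg_left, neg_neg, smul_neg, mul_neg, neg_div,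
    neg_smul]

lemma reflVec_of_inner_eq_zero {α v : Vn n} (h : ⟪v, α⟫ = 0) : reflVec α v = v := by
  rw [reflVec, h, mul_zero, zero_div, zero_smul, sub_zero]

lemma inner_reflVec_left (α u v : Vn n) : ⟪reflVec α u, v⟫ = ⟪u, reflVec α v⟫ := by
  simp only [reflVec, inner_sub_left, inner_sub_right, real_inner_smul_left,
    real_inner_smul_right, real_inner_comm α v]
  ring

lemma reflVec_self {α : Vn n} (hα : α ≠ 0) : reflVec α α = -α := by
  rw [reflVec, mul_div_assoc, div_self (inner_self_ne_zero.mpr hα), mul_one, two_smul]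
  abel

lemma reflVec_reflVec {α : Vn n} (hα : α ≠ 0) (v : Vn n) : reflVec α (reflVec α v) = v := by
  conv_lhs => arg 2; rw [reflVec_eq_sub_smul_coroot]
  rw [reflVec_sub, reflVec_smul, coroot, reflVec_smul, reflVec_self hα,
    reflVec_eq_sub_smul_coroot, coroot]
  module

lemma inner_reflVec_reflVec {α : Vn n} (hα : α ≠ 0) (u v : Vn n) :
    ⟪reflVec α u, reflVec α v⟫ = ⟪u, v⟫ := by
  rw [inner_reflVec_left, reflVec_reflVec hα]

lemma coroot_reflVec {α : Vn n} (hα : α ≠ 0) (v : Vn n) :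
    coroot (reflVec α v) = reflVec α (coroot v) := by
  rw [coroot, coroot, inner_reflVec_reflVec hα, reflVec_smul]

lemma reflVec_conj {α : Vn n} (hα : α ≠ 0) (u v : Vn n) :
    reflVec (reflVec α u) v = reflVec α (reflVec u (reflVec α v)) := by
  rw [reflVec_eq_sub_smul_coroot u, reflVec_sub, reflVec_smul, reflVec_reflVec hα,
    inner_reflVec_left, ← coroot_reflVec hα, reflVec_eq_sub_smul_coroot]

end Reflection

section GroupAlgebra

open AddMonoidAlgebra

variable {n : ℕ} {D : RootSystemData n}

-- makes `ℂ[P]` a domain, so that divided differences are unique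
instance (P : Submodule ℤ (Vn n)) : UniqueSums P :=
  UniqueSums.of_injective_addHom P.subtype.toAddMonoidHom.toAddHom Subtype.val_injective
    inferInstance

lemma XP_of_mem {v : Vn n} (hv : v ∈ D.P) : XP D v = single ⟨v, hv⟩ 1 := dif_pos hv

lemma XP_zero : XP D 0 = 1 := XP_of_mem (zero_mem _)

lemma XP_add {u v : Vn n} (hu : u ∈ D.P) (hv : v ∈ D.P) :
    XP D (u + v) = XP D u * XP D v := by
  rw [XP_of_mem hu, XP_of_mem hv, XP_of_mem (add_mem hu hv), single_mul_single, one_mul]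
  rfl

lemma XP_mul_XP_neg {v : Vn n} (hv : v ∈ D.P) : XP D v * XP D (-v) = 1 := by
  rw [← XP_add hv (neg_mem hv), add_neg_cancel, XP_zero]

lemma one_sub_XP_ne_zero {v : Vn n} (hv : v ∈ D.P) (h0 : v ≠ 0) : (1 : GA D) - XP D v ≠ 0 := by
  rw [sub_ne_zero, XP_of_mem hv, one_def]
  intro h
  rcases single_inj.mp h with ⟨h, -⟩ | ⟨h, -⟩
  · exact h0 (congrArg Subtype.val h).symm
  · exact one_ne_zero h

def derLinearMap (b : Vn n) : GA D →ₗ[ℂ] GA D :=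
  Finsupp.lsum ℂ (fun c : ↥D.P => ((⟪b, (c : Vn n)⟫ : ℝ) : ℂ) • (lsingle c : ℂ →ₗ[ℂ] GA D)) ∘ₗ
    (coeffLinearEquiv ℂ).toLinearMap

lemma der_eq_derLinearMap (b : Vn n) : der D b = derLinearMap b := rfl

lemma der_single (b : Vn n) (c : ↥D.P) (r : ℂ) :
    der D b (single c r) = ((⟪b, (c : Vn n)⟫ : ℝ) : ℂ) • single c r := by
  rw [der, coeff_single, Finsupp.sum_single_index (by rw [single_zero, smul_zero])]

lemma der_XP_mul (b : Vn n) {v : Vn n} (hv : v ∈ D.P) (f : GA D) :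
    der D b (XP D v * f) = ((⟪b, v⟫ : ℝ) : ℂ) • (XP D v * f) + XP D v * der D b f := by
  simp only [der_eq_derLinearMap]
  induction f using induction_linear with
  | zero => simp
  | add f g hf hg => simp only [mul_add, map_add, hf, hg, smul_add]; abel
  | single c r =>
    simp only [← der_eq_derLinearMap, XP_of_mem hv, single_mul_single, one_mul, der_single,
      mul_smul_comm, ← add_smul, Submodule.coe_add, inner_add_right, Complex.ofReal_add]

lemma sOp_eq_mapDomainLinearMap (s : ↥D.P → ↥D.P) : sOp D s = mapDomainLinearMap ℂ ℂ s := rfl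

lemma sOp_add (s : ↥D.P → ↥D.P) (f g : GA D) : sOp D s (f + g) = sOp D s f + sOp D s g := by
  simp only [sOp_eq_mapDomainLinearMap, map_add]

lemma sOp_sub (s : ↥D.P → ↥D.P) (f g : GA D) : sOp D s (f - g) = sOp D s f - sOp D s g := by
  simp only [sOp_eq_mapDomainLinearMap, map_sub]

lemma sOp_smul (s : ↥D.P → ↥D.P) (z : ℂ) (f : GA D) : sOp D s (z • f) = z • sOp D s f := by
  simp only [sOp_eq_mapDomainLinearMap, map_smul]

lemma sOp_sum {ι : Type*} (s : ↥D.P → ↥D.P) (t : Finset ι) (F : ι → GA D) :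
    sOp D s (∑ x ∈ t, F x) = ∑ x ∈ t, sOp D s (F x) := by
  simp only [sOp_eq_mapDomainLinearMap, map_sum]

lemma sOp_single (s : ↥D.P → ↥D.P) (c : ↥D.P) (r : ℂ) : sOp D s (single c r) = single (s c) r :=
  mapDomainLinearMap_single (R := ℂ) s r c

lemma sOp_id (f : GA D) : sOp D id f = f := by
  rw [sOp, Finsupp.mapDomain_id]

lemma sOp_sOp (s t : ↥D.P → ↥D.P) (f : GA D) : sOp D s (sOp D t f) = sOp D (s ∘ t) f := by
  simp only [sOp_eq_mapDomainLinearMap, mapDomainLinearMap_comp, LinearMap.comp_apply]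

end GroupAlgebra

section ReflectionAction

open AddMonoidAlgebra

variable {n : ℕ} {D : RootSystemData n} {α : Vn n} {s : ↥D.P → ↥D.P}

def IsReflAction (D : RootSystemData n) (α : Vn n) (s : ↥D.P → ↥D.P) : Prop :=
  ∀ p : ↥D.P, (s p : Vn n) = reflVec α p

namespace IsReflAction

lemma neg (hs : IsReflAction D α s) : IsReflAction D (-α) s := fun p => by
  rw [hs, reflVec_neg_left]

lemma reflVec_mem (hs : IsReflAction D α s) {v : Vn n} (hv : v ∈ D.P) : reflVec α v ∈ D.P :=
  hs ⟨v, hv⟩ ▸ (s ⟨v, hv⟩).2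

def addMonoidHom (hs : IsReflAction D α s) : ↥D.P →+ ↥D.P :=
  AddMonoidHom.mk' s fun p q => Subtype.ext <| by
    rw [Submodule.coe_add, hs, hs, hs, Submodule.coe_add, reflVec_add]

lemma sOp_mul (hs : IsReflAction D α s) (f g : GA D) :
    sOp D s (f * g) = sOp D s f * sOp D s g :=
  map_mul (mapDomainAlgHom ℂ ℂ hs.addMonoidHom) f g

lemma sOp_one (hs : IsReflAction D α s) : sOp D s 1 = 1 :=
  map_one (mapDomainAlgHom ℂ ℂ hs.addMonoidHom)

lemma sOp_XP (hs : IsReflAction D α s) {v : Vn n} (hv : v ∈ D.P) :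
    sOp D s (XP D v) = XP D (reflVec α v) := by
  rw [XP_of_mem hv, sOp_single, XP_of_mem (hs.reflVec_mem hv)]
  exact congrArg (fun p => single p 1) (Subtype.ext (hs ⟨v, hv⟩))

lemma sOp_sOp_self (hs : IsReflAction D α s) (hα : α ≠ 0) (f : GA D) :
    sOp D s (sOp D s f) = f := by
  have hss : s ∘ s = id := funext fun p => Subtype.ext <| by
    rw [Function.comp_apply, hs, hs, reflVec_reflVec hα, id]
  rw [sOp_sOp, hss, sOp_id]

lemma sOp_der (hs : IsReflAction D α s) (hα : α ≠ 0) (b : Vn n) (f : GA D) :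
    sOp D s (der D b f) = der D (reflVec α b) (sOp D s f) := by
  simp only [der_eq_derLinearMap, sOp_eq_mapDomainLinearMap]
  induction f using induction_linear with
  | zero => simp
  | add f g hf hg => simp only [map_add, hf, hg]
  | single c r =>
    simp only [← der_eq_derLinearMap, ← sOp_eq_mapDomainLinearMap]
    rw [der_single, sOp_smul, sOp_single, der_single, hs, inner_reflVec_reflVec hα]

lemma sOp_conj (hs : IsReflAction D α s) (hα : α ≠ 0) {β : Vn n} {t u : ↥D.P → ↥D.P}
    (ht : IsReflAction D β t) (hu : IsReflAction D (reflVec α β) u) (f : GA D) :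
    sOp D s (sOp D t f) = sOp D u (sOp D s f) := by
  have hcomp : s ∘ t = u ∘ s := funext fun p => Subtype.ext <| by
    rw [Function.comp_apply, Function.comp_apply, hs, ht, hu, hs, reflVec_conj hα,
      reflVec_reflVec hα]
  rw [sOp_sOp, sOp_sOp, hcomp]

end IsReflAction

end ReflectionAction

section DividedDifference

variable {n : ℕ} {D : RootSystemData n} {δ : Vn n} {s : ↥D.P → ↥D.P} {h y g' : GA D}

def IsDivDiff (D : RootSystemData n) (α : Vn n) (s : ↥D.P → ↥D.P) (f g : GA D) : Prop :=
  (1 - XP D (-α)) * g = f - sOp D s f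

namespace IsDivDiff

lemma eq {α : Vn n} {f g : GA D} (hα : α ∈ D.P) (h0 : α ≠ 0) (hg : IsDivDiff D α s f g)
    (hg' : IsDivDiff D α s f g') : g = g' :=
  mul_left_cancel₀ (one_sub_XP_ne_zero (neg_mem hα) (neg_ne_zero.mpr h0)) (hg.trans hg'.symm)

lemma reflect {α β : Vn n} {t u : ↥D.P → ↥D.P} {f g : GA D} (hs : IsReflAction D α s)
    (hα : α ≠ 0) (ht : IsReflAction D β t) (hu : IsReflAction D (reflVec α β) u) (hβ : β ∈ D.P)
    (hg : IsDivDiff D β t f g) : IsDivDiff D (reflVec α β) u (sOp D s f) (sOp D s g) := by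
  have := congrArg (sOp D s) hg
  rwa [hs.sOp_mul, sOp_sub, hs.sOp_one, hs.sOp_XP (neg_mem hβ), reflVec_neg, sOp_sub,
    hs.sOp_conj hα ht hu] at this

lemma XP_mul {μ : Vn n} (hs : IsReflAction D δ s) (hμ : μ ∈ D.P) (hperp : reflVec δ μ = μ)
    (hy : IsDivDiff D δ s h y) : IsDivDiff D δ s (XP D μ * h) (XP D μ * y) := by
  unfold IsDivDiff at hy ⊢
  rw [hs.sOp_mul, hs.sOp_XP hμ, hperp]
  linear_combination XP D μ * hy

lemma eq_sub_of_neg (hδ : δ ∈ D.P) (h0 : δ ≠ 0)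
    (hy : IsDivDiff D (-δ) s h y) (hg' : IsDivDiff D δ s h g') : y = h - sOp D s h - g' := by
  unfold IsDivDiff at hy hg'
  rw [neg_neg] at hy
  refine mul_left_cancel₀ (one_sub_XP_ne_zero hδ h0) ?_
  linear_combination hy - XP D δ * hg' - g' * XP_mul_XP_neg hδ

lemma XP_mul_eq_of_neg {μ : Vn n} (hs : IsReflAction D δ s) (hδ : δ ∈ D.P) (h0 : δ ≠ 0)
    (hμ : μ ∈ D.P) (hμδ : reflVec δ μ = μ - δ)
    (hy : IsDivDiff D (-δ) s h y) (hg' : IsDivDiff D δ s (XP D μ * h) g') :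
    XP D μ * y = XP D μ * h - g' := by
  unfold IsDivDiff at hy hg'
  rw [neg_neg] at hy
  rw [hs.sOp_mul, hs.sOp_XP hμ, hμδ, sub_eq_add_neg μ, XP_add hμ (neg_mem hδ)] at hg'
  refine mul_left_cancel₀ (one_sub_XP_ne_zero (neg_mem hδ) (neg_ne_zero.mpr h0)) ?_
  linear_combination (-XP D μ * XP D (-δ)) * hy + hg' - XP D μ * y * XP_mul_XP_neg hδ

lemma XP_self_mul_eq_of_neg (hs : IsReflAction D δ s) (hδ : δ ∈ D.P) (h0 : δ ≠ 0)
    (hy : IsDivDiff D (-δ) s h y) (hg' : IsDivDiff D δ s (XP D δ * h) g') :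
    XP D δ * y = XP D δ * h + sOp D s h - g' := by
  unfold IsDivDiff at hy hg'
  rw [neg_neg] at hy
  rw [hs.sOp_mul, hs.sOp_XP hδ, reflVec_self h0] at hg'
  refine mul_left_cancel₀ (one_sub_XP_ne_zero (neg_mem hδ) (neg_ne_zero.mpr h0)) ?_
  linear_combination hg' - hy - (y - h) * XP_mul_XP_neg hδ

end IsDivDiff

end DividedDifference

lemma sum_comp_involution {ι M : Type*} [AddCommMonoid M] {s : Finset ι} {σ : ι → ι}
    (hσ : ∀ x ∈ s, σ x ∈ s) (hσσ : ∀ x ∈ s, σ (σ x) = x) (F : ι → M) :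
    ∑ x ∈ s, F (σ x) = ∑ x ∈ s, F x :=
  Finset.sum_nbij' σ σ hσ hσ hσσ hσσ fun _ _ => rfl

section RootSystem

variable {n : ℕ} {D : RootSystemData n} {β γ : Vn n}

lemma ne_zero_of_mem_Rplus (hβ : β ∈ D.Rplus) : β ≠ 0 := D.root_ne_zero β (D.pos_sub hβ)

lemma sroot_mem_R (i : Fin n) : D.sroot i ∈ D.R := D.pos_sub (D.sroot_mem i)

lemma sroot_ne_zero (i : Fin n) : D.sroot i ≠ 0 := ne_zero_of_mem_Rplus (D.sroot_mem i)

lemma hst_mem_R : D.hst ∈ D.R := D.pos_sub D.theta_mem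

lemma hst_ne_zero : D.hst ≠ 0 := ne_zero_of_mem_Rplus D.theta_mem

lemma inner_fw_sroot (i j : Fin n) :
    ⟪D.fw i, D.sroot j⟫ = if i = j then ⟪D.sroot j, D.sroot j⟫ / 2 else 0 := by
  have h := D.fw_pair i j
  have hA := (inner_self_ne_zero (𝕜 := ℝ)).mpr (sroot_ne_zero (D := D) j)
  rw [coroot, real_inner_smul_right] at h
  split_ifs at h ⊢
  · field_simp at h ⊢
    linarith
  · exact (mul_eq_zero.mp h).resolve_left (div_ne_zero two_ne_zero hA)

lemma inner_fw_sum_smul_sroot (c : Fin n → ℝ) (j : Fin n) :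
    ⟪D.fw j, ∑ l, c l • D.sroot l⟫ = c j * (⟪D.sroot j, D.sroot j⟫ / 2) := by
  simp only [inner_sum, real_inner_smul_right, inner_fw_sroot, mul_ite, mul_zero,
    Finset.sum_ite_eq, Finset.mem_univ, if_true]

lemma inner_fw_nonneg (hβ : β ∈ D.Rplus) (j : Fin n) : 0 ≤ ⟪D.fw j, β⟫ := by
  obtain ⟨c, rfl⟩ := D.pos_decomp β hβ
  rw [inner_fw_sum_smul_sroot]
  have := real_inner_self_nonneg (x := D.sroot j)
  positivity

lemma exists_inner_fw_pos (hβ : β ∈ D.Rplus) {i : Fin n} (hne : β ≠ D.sroot i) :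
    ∃ j, j ≠ i ∧ 0 < ⟪D.fw j, β⟫ := by
  by_contra! hle
  obtain ⟨c, hc⟩ := D.pos_decomp β hβ
  have hc0 : ∀ j, j ≠ i → (c j : ℝ) = 0 := fun j hj => by
    have hpos := real_inner_self_pos.mpr (sroot_ne_zero (D := D) j)
    have h0 := le_antisymm (hle j hj) (inner_fw_nonneg hβ j)
    rw [hc, inner_fw_sum_smul_sroot] at h0
    exact (mul_eq_zero.mp h0).resolve_right (by positivity)
  have hβi : β = (c i : ℝ) • D.sroot i := by
    rw [hc, Finset.sum_eq_single i (fun j _ hj => by rw [hc0 j hj, zero_smul])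
      (fun h => absurd (Finset.mem_univ i) h)]
  have hβR := D.pos_sub hβ
  rw [hβi] at hβR
  rcases D.reduced _ (sroot_mem_R i) _ hβR with h1 | h1
  · exact hne (by rw [hβi, h1, one_smul])
  · linarith [(c i).cast_nonneg (α := ℝ)]

lemma reflVec_sroot_mem_Rplus (hβ : β ∈ D.Rplus) {i : Fin n} (hne : β ≠ D.sroot i) :
    reflVec (D.sroot i) β ∈ D.Rplus := by
  obtain ⟨j, hji, hpos⟩ := exists_inner_fw_pos hβ hne
  have hfw : ⟪D.fw j, reflVec (D.sroot i) β⟫ = ⟪D.fw j, β⟫ := by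
    rw [reflVec, inner_sub_right, real_inner_smul_right, inner_fw_sroot, if_neg hji, mul_zero,
      sub_zero]
  refine (D.pos_or _ (D.reflect_mem _ (sroot_mem_R i) _ (D.pos_sub hβ))).resolve_right
    fun hneg => ?_
  have := inner_fw_nonneg hneg j
  rw [inner_neg_right, hfw] at this
  linarith

lemma reflVec_sroot_ne_sroot (hβ : β ∈ D.Rplus) (i : Fin n) :
    reflVec (D.sroot i) β ≠ D.sroot i := fun h => by
  have hβ' : β = -D.sroot i := by
    rw [← reflVec_reflVec (sroot_ne_zero i) β, h, reflVec_self (sroot_ne_zero i)]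
  exact D.pos_not_and _ (D.sroot_mem i) (hβ' ▸ hβ)

lemma reflVec_sroot_mem_erase (i : Fin n) (hβ : β ∈ D.Rplus.erase (D.sroot i)) :
    reflVec (D.sroot i) β ∈ D.Rplus.erase (D.sroot i) := by
  obtain ⟨hne, hβ⟩ := Finset.mem_erase.mp hβ
  exact Finset.mem_erase.mpr ⟨reflVec_sroot_ne_sroot hβ i, reflVec_sroot_mem_Rplus hβ hne⟩

lemma inner_coroot_hst_sroot_nonneg (i : Fin n) : 0 ≤ ⟪coroot D.hst, D.sroot i⟫ := by
  have hα := sroot_ne_zero (D := D) i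
  obtain ⟨c, hc0, hc⟩ := D.theta_highest _ (D.reflect_mem _ (sroot_mem_R i) _ hst_mem_R)
  rw [coroot_reflVec hα, reflVec_eq_sub_smul_coroot, sub_sub_cancel] at hc
  have := congrArg (⟪D.fw i, ·⟫) hc
  simp only [real_inner_smul_right, inner_sum, D.fw_pair, mul_ite, mul_one, mul_zero,
    Finset.sum_ite_eq, Finset.mem_univ, if_true] at this
  exact this ▸ hc0 i

lemma inner_hst_sroot_nonneg (i : Fin n) : 0 ≤ ⟪D.hst, D.sroot i⟫ := by
  have h := inner_coroot_hst_sroot_nonneg (D := D) i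
  have hpos := real_inner_self_pos.mpr (hst_ne_zero (D := D))
  rw [coroot, real_inner_smul_left] at h
  exact (mul_nonneg_iff_of_pos_left (by positivity)).mp h

lemma inner_hst_nonneg (hβ : β ∈ D.Rplus) : 0 ≤ ⟪D.hst, β⟫ := by
  obtain ⟨c, rfl⟩ := D.pos_decomp β hβ
  rw [inner_sum]
  exact Finset.sum_nonneg fun l _ => by
    rw [real_inner_smul_right]
    exact mul_nonneg (Nat.cast_nonneg _) (inner_hst_sroot_nonneg l)

lemma two_mul_inner_hst (hγ : γ ∈ D.Rplus) (hne : γ ≠ D.hst) (hm : ⟪D.hst, γ⟫ ≠ 0) :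
    2 * ⟪D.hst, γ⟫ = ⟪γ, γ⟫ := by
  have hγR := D.pos_sub hγ
  have hA : 0 < ⟪γ, γ⟫ := real_inner_self_pos.mpr (D.root_ne_zero γ hγR)
  have hT : ⟪D.hst, D.hst⟫ ≤ ⟪γ, γ⟫ := D.theta_short γ hγR
  have hm0 : 0 < ⟪D.hst, γ⟫ := (inner_hst_nonneg hγ).lt_of_ne' hm
  have hcs := real_inner_mul_inner_self_le D.hst γ
  obtain ⟨z, hz⟩ := D.crystallographic γ hγR D.hst hst_mem_R
  have hzA : (z : ℝ) * ⟪γ, γ⟫ = 2 * ⟪D.hst, γ⟫ := by rw [← hz]; field_simp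
  have hz0 : 0 < z := by exact_mod_cast (show (0 : ℝ) < z by rw [← hz]; positivity)
  obtain rfl | hz2 : z = 1 ∨ 2 ≤ z := by omega
  · rw [Int.cast_one, one_mul] at hzA
    exact hzA.symm
  have hz2 : (2 : ℝ) ≤ z := by exact_mod_cast hz2
  -- otherwise `⟪θ, γ⟫ ≥ ⟪γ, γ⟫ ≥ ⟪θ, θ⟫`, and Cauchy–Schwarz forces `γ = θ`
  exfalso
  have hmA : ⟪γ, γ⟫ ≤ ⟪D.hst, γ⟫ := by nlinarith
  have hTA : ⟪D.hst, D.hst⟫ = ⟪γ, γ⟫ := by nlinarith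
  have hmA' : ⟪D.hst, γ⟫ = ⟪γ, γ⟫ := by nlinarith
  have hsq : ⟪D.hst - γ, D.hst - γ⟫ = 0 := by
    rw [inner_sub_left, inner_sub_right, inner_sub_right, real_inner_comm D.hst γ]
    linarith
  exact hne (sub_eq_zero.mp (inner_self_eq_zero.mp hsq)).symm

lemma reflVec_hst_of_inner_ne_zero (hγ : γ ∈ D.Rplus) (hne : γ ≠ D.hst)
    (hm : ⟪D.hst, γ⟫ ≠ 0) : reflVec γ D.hst = D.hst - γ := by
  rw [reflVec, two_mul_inner_hst hγ hne hm,
    div_self (inner_self_ne_zero.mpr (ne_zero_of_mem_Rplus hγ)), one_smul]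

lemma inner_hst_neg_reflVec_hst (γ : Vn n) : ⟪D.hst, -reflVec D.hst γ⟫ = ⟪D.hst, γ⟫ := by
  rw [inner_neg_right, ← inner_reflVec_left, reflVec_self hst_ne_zero, inner_neg_left, neg_neg]

lemma neg_reflVec_hst_neg_reflVec_hst (γ : Vn n) : -reflVec D.hst (-reflVec D.hst γ) = γ := by
  rw [reflVec_neg, neg_neg, reflVec_reflVec hst_ne_zero]

lemma neg_reflVec_hst_mem_Rplus (hγ : γ ∈ D.Rplus) (hm : ⟪D.hst, γ⟫ ≠ 0) :
    -reflVec D.hst γ ∈ D.Rplus := by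
  refine (D.pos_or _ (D.reflect_mem _ hst_mem_R _ (D.pos_sub hγ))).resolve_left fun hpos => ?_
  have h1 := inner_hst_nonneg hpos
  have h2 := inner_hst_neg_reflVec_hst (D := D) γ
  have h3 := (inner_hst_nonneg hγ).lt_of_ne' hm
  rw [inner_neg_right] at h2
  linarith

lemma neg_reflVec_hst_ne_hst (hne : γ ≠ D.hst) : -reflVec D.hst γ ≠ D.hst := fun h => hne <| by
  rw [← neg_reflVec_hst_neg_reflVec_hst γ, h, reflVec_self hst_ne_zero, neg_neg]

lemma neg_reflVec_hst_mem_filter (hγ : γ ∈ D.Rplus.filter (⟪D.hst, ·⟫ ≠ 0)) :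
    -reflVec D.hst γ ∈ D.Rplus.filter (⟪D.hst, ·⟫ ≠ 0) := by
  obtain ⟨hγ, hm⟩ := Finset.mem_filter.mp hγ
  exact Finset.mem_filter.mpr ⟨neg_reflVec_hst_mem_Rplus hγ hm, by
    rw [inner_hst_neg_reflVec_hst]; exact hm⟩

end RootSystem

section RhoK

variable {n : ℕ} {D : RootSystemData n} {k : Vn n → ℂ}

def innerRhoK (D : RootSystemData n) (k : Vn n → ℂ) (b : Vn n) : ℂ :=
  (1 / 2 : ℂ) * ∑ α ∈ D.Rplus, k α * ((⟪α, b⟫ : ℝ) : ℂ)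

lemma k_neg (hk : ∀ α ∈ D.R, ∀ β ∈ D.R, k (reflVec α β) = k β) {α : Vn n} (hα : α ∈ D.R) :
    k (-α) = k α := by
  rw [← reflVec_self (D.root_ne_zero α hα), hk α hα α hα]

lemma k_neg_reflVec (hk : ∀ α ∈ D.R, ∀ β ∈ D.R, k (reflVec α β) = k β) {α γ : Vn n}
    (hα : α ∈ D.R) (hγ : γ ∈ D.R) : k (-reflVec α γ) = k γ := by
  rw [k_neg hk (D.reflect_mem α hα γ hγ), hk α hα γ hγ]

lemma innerRhoK_sub_innerRhoK_reflVec_sroot (hk : ∀ α ∈ D.R, ∀ β ∈ D.R, k (reflVec α β) = k β)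
    (i : Fin n) (b : Vn n) :
    innerRhoK D k b - innerRhoK D k (reflVec (D.sroot i) b) =
      k (D.sroot i) * ((⟪b, D.sroot i⟫ : ℝ) : ℂ) := by
  have ha := sroot_ne_zero (D := D) i
  have hperm :
      ∑ α ∈ D.Rplus.erase (D.sroot i), k α * ((⟪α, reflVec (D.sroot i) b⟫ : ℝ) : ℂ) =
        ∑ α ∈ D.Rplus.erase (D.sroot i), k α * ((⟪α, b⟫ : ℝ) : ℂ) := by
    rw [← sum_comp_involution (fun α hα => reflVec_sroot_mem_erase i hα)
      (fun α _ => reflVec_reflVec ha α)]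
    refine Finset.sum_congr rfl fun α hα => ?_
    rw [hk _ (sroot_mem_R i) α (D.pos_sub (Finset.mem_of_mem_erase hα)),
      inner_reflVec_reflVec ha]
  unfold innerRhoK
  rw [← Finset.add_sum_erase _ _ (D.sroot_mem i), ← Finset.add_sum_erase _ _ (D.sroot_mem i),
    hperm, ← inner_reflVec_left, reflVec_self ha, inner_neg_left, real_inner_comm]
  push_cast
  ring

lemma sum_filter_inner_hst_ne_zero (hk : ∀ α ∈ D.R, ∀ β ∈ D.R, k (reflVec α β) = k β)
    (b : Vn n) :
    ∑ γ ∈ D.Rplus.filter (⟪D.hst, ·⟫ ≠ 0), k γ * ((⟪b, γ⟫ : ℝ) : ℂ) =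
      innerRhoK D k b - innerRhoK D k (reflVec D.hst b) := by
  set Q := D.Rplus.filter (⟪D.hst, ·⟫ ≠ 0)
  have hpair : ∀ γ ∈ Q, k γ * ((⟪b, γ⟫ : ℝ) : ℂ) +
      k (-reflVec D.hst γ) * ((⟪b, -reflVec D.hst γ⟫ : ℝ) : ℂ) =
      k γ * ((⟪γ, b⟫ - ⟪γ, reflVec D.hst b⟫ : ℝ) : ℂ) := fun γ hγ => by
    have hγR := D.pos_sub (Finset.mem_filter.mp hγ).1
    rw [k_neg_reflVec hk hst_mem_R hγR, inner_neg_right, ← inner_reflVec_left, real_inner_comm b,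
      real_inner_comm (reflVec _ b)]
    push_cast
    ring
  have hperp : ∀ γ ∈ D.Rplus, k γ * ((⟪γ, b⟫ - ⟪γ, reflVec D.hst b⟫ : ℝ) : ℂ) ≠ 0 →
      ⟪D.hst, γ⟫ ≠ 0 := fun γ _ h h0 => h <| by
    rw [← inner_reflVec_left, reflVec_of_inner_eq_zero ((real_inner_comm _ _).trans h0),
      sub_self, Complex.ofReal_zero, mul_zero]
  calc ∑ γ ∈ Q, k γ * ((⟪b, γ⟫ : ℝ) : ℂ)
      = (1 / 2 : ℂ) * ∑ γ ∈ Q, (k γ * ((⟪b, γ⟫ : ℝ) : ℂ) +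
          k (-reflVec D.hst γ) * ((⟪b, -reflVec D.hst γ⟫ : ℝ) : ℂ)) := by
        rw [Finset.sum_add_distrib, sum_comp_involution (fun γ => neg_reflVec_hst_mem_filter)
          (fun γ _ => neg_reflVec_hst_neg_reflVec_hst γ) (fun γ => k γ * ((⟪b, γ⟫ : ℝ) : ℂ))]
        ring
    _ = (1 / 2 : ℂ) * ∑ γ ∈ D.Rplus, k γ * ((⟪γ, b⟫ - ⟪γ, reflVec D.hst b⟫ : ℝ) : ℂ) := by
        rw [Finset.sum_congr rfl hpair, Finset.sum_filter_of_ne hperp]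
    _ = innerRhoK D k b - innerRhoK D k (reflVec D.hst b) := by
        simp only [innerRhoK, Complex.ofReal_sub, mul_sub, Finset.sum_sub_distrib]

end RhoK

section Dunkl

open AddMonoidAlgebra

variable {n : ℕ} {D : RootSystemData n} {k : Vn n → ℂ} {sP : Vn n → ↥D.P → ↥D.P}

lemma IsTrigDunkl.exists_divDiff {b : Vn n} {Dop : GA D → GA D} (h : IsTrigDunkl D k sP b Dop)
    (f : GA D) : ∃ g : Vn n → GA D, (∀ α ∈ D.Rplus, IsDivDiff D α (sP α) f (g α)) ∧
      Dop f = der D b f + ∑ α ∈ D.Rplus, (k α * ((⟪b, α⟫ : ℝ) : ℂ)) • g α -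
        innerRhoK D k b • f :=
  h f

lemma sum_smul_sOp_divDiff_sroot (hRP : ∀ α ∈ D.R, α ∈ D.P)
    (hk : ∀ α ∈ D.R, ∀ β ∈ D.R, k (reflVec α β) = k β)
    (hsP : ∀ α ∈ D.R, IsReflAction D α (sP α)) (i : Fin n) (b : Vn n) {f : GA D}
    {g g' : Vn n → GA D} (hg : ∀ β ∈ D.Rplus, IsDivDiff D β (sP β) f (g β))
    (hg' : ∀ β ∈ D.Rplus, IsDivDiff D β (sP β) (sOp D (sP (D.sroot i)) f) (g' β)) :
    ∑ β ∈ D.Rplus, (k β * ((⟪b, β⟫ : ℝ) : ℂ)) • sOp D (sP (D.sroot i)) (g β) =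
      ∑ β ∈ D.Rplus, (k β * ((⟪reflVec (D.sroot i) b, β⟫ : ℝ) : ℂ)) • g' β +
        (k (D.sroot i) * ((⟪b, D.sroot i⟫ : ℝ) : ℂ)) • (sOp D (sP (D.sroot i)) f - f) := by
  set a := D.sroot i
  have haR : a ∈ D.R := sroot_mem_R i
  have ha : a ≠ 0 := sroot_ne_zero i
  have hs := hsP a haR
  have hrest : ∀ β ∈ D.Rplus.erase a, (k β * ((⟪b, β⟫ : ℝ) : ℂ)) • sOp D (sP a) (g β) =
      (k (reflVec a β) * ((⟪reflVec a b, reflVec a β⟫ : ℝ) : ℂ)) • g' (reflVec a β) := by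
    intro β hβ'
    obtain ⟨hne, hβ⟩ := Finset.mem_erase.mp hβ'
    have hβR := D.pos_sub hβ
    have hγ := reflVec_sroot_mem_Rplus hβ hne
    have hγR := D.pos_sub hγ
    rw [((hg β hβ).reflect hs ha (hsP β hβR) (hsP _ hγR) (hRP β hβR)).eq (hRP _ hγR)
      (D.root_ne_zero _ hγR) (hg' _ hγ), hk a haR β hβR, inner_reflVec_reflVec ha]
  have hself : sOp D (sP a) (g a) = sOp D (sP a) f - f - g' a := by
    have hy := (hg a (D.sroot_mem i)).reflect hs ha hs
      (by rw [reflVec_self ha]; exact hs.neg) (hRP a haR)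
    rw [reflVec_self ha] at hy
    rw [hy.eq_sub_of_neg (hRP a haR) ha (hg' a (D.sroot_mem i)), hs.sOp_sOp_self ha]
  have hsum := (Finset.sum_congr rfl hrest).trans (sum_comp_involution
    (fun β hβ => reflVec_sroot_mem_erase i hβ) (fun β _ => reflVec_reflVec ha β)
    fun γ => (k γ * ((⟪reflVec a b, γ⟫ : ℝ) : ℂ)) • g' γ)
  rw [← Finset.add_sum_erase _ _ (D.sroot_mem i), hsum,
    ← Finset.add_sum_erase _ _ (D.sroot_mem i), hself, inner_reflVec_left, reflVec_self ha,
    inner_neg_right]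
  push_cast
  module

theorem sOp_sroot_dunkl_sub (hRP : ∀ α ∈ D.R, α ∈ D.P)
    (hk : ∀ α ∈ D.R, ∀ β ∈ D.R, k (reflVec α β) = k β)
    (hsP : ∀ α ∈ D.R, IsReflAction D α (sP α)) (i : Fin n) {b : Vn n}
    {Db Dsb : GA D → GA D} (hDb : IsTrigDunkl D k sP b Db)
    (hDsb : IsTrigDunkl D k sP (reflVec (D.sroot i) b) Dsb) (f : GA D) :
    sOp D (sP (D.sroot i)) (Db f) - Dsb (sOp D (sP (D.sroot i)) f) =
      (-(k (D.sroot i) * ((⟪b, D.sroot i⟫ : ℝ) : ℂ))) • f := by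
  obtain ⟨g, hg, hDbf⟩ := IsTrigDunkl.exists_divDiff hDb f
  obtain ⟨g', hg', hDsbf⟩ := IsTrigDunkl.exists_divDiff hDsb (sOp D (sP (D.sroot i)) f)
  have hρ : innerRhoK D k (reflVec (D.sroot i) b) =
      innerRhoK D k b - k (D.sroot i) * ((⟪b, D.sroot i⟫ : ℝ) : ℂ) := by
    rw [← innerRhoK_sub_innerRhoK_reflVec_sroot hk i b, sub_sub_cancel]
  have hs := hsP _ (sroot_mem_R i)
  rw [hDbf, hDsbf, sOp_sub, sOp_add, sOp_sum, hs.sOp_der (sroot_ne_zero i)]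
  simp only [sOp_smul]
  rw [sum_smul_sOp_divDiff_sroot hRP hk hsP i b hg hg', hρ]
  module

def affineRefl (D : RootSystemData n) (sP : Vn n → ↥D.P → ↥D.P) : GA D →ₗ[ℂ] GA D :=
  LinearMap.mulLeft ℂ (XP D D.hst) ∘ₗ mapDomainLinearMap ℂ ℂ (sP D.hst)

lemma affineRefl_apply (f : GA D) : affineRefl D sP f = XP D D.hst * sOp D (sP D.hst) f := rfl

lemma affineRefl_der (hRP : ∀ α ∈ D.R, α ∈ D.P) (hsP : ∀ α ∈ D.R, IsReflAction D α (sP α))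
    (b : Vn n) (f : GA D) :
    affineRefl D sP (der D b f) =
      der D (reflVec D.hst b) (affineRefl D sP f) +
        ((⟪b, D.hst⟫ : ℝ) : ℂ) • affineRefl D sP f := by
  simp only [affineRefl_apply]
  rw [(hsP _ hst_mem_R).sOp_der hst_ne_zero, der_XP_mul _ (hRP _ hst_mem_R),
    inner_reflVec_left, reflVec_self hst_ne_zero, inner_neg_right, Complex.ofReal_neg]
  module

lemma affineRefl_divDiff_of_inner_eq_zero (hRP : ∀ α ∈ D.R, α ∈ D.P)
    (hsP : ∀ α ∈ D.R, IsReflAction D α (sP α)) {γ : Vn n} (hγ : γ ∈ D.R)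
    (hm : ⟪D.hst, γ⟫ = 0) {f g g' : GA D} (hg : IsDivDiff D γ (sP γ) f g)
    (hg' : IsDivDiff D γ (sP γ) (affineRefl D sP f) g') : affineRefl D sP g = g' := by
  have hθγ : reflVec D.hst γ = γ := reflVec_of_inner_eq_zero ((real_inner_comm _ _).trans hm)
  have ht := hsP γ hγ
  have hy := hg.reflect (hsP _ hst_mem_R) hst_ne_zero ht (hθγ ▸ ht) (hRP γ hγ)
  rw [hθγ] at hy
  exact (hy.XP_mul ht (hRP _ hst_mem_R) (reflVec_of_inner_eq_zero hm)).eq (hRP γ hγ)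
    (D.root_ne_zero γ hγ) hg'

lemma affineRefl_divDiff_of_inner_ne_zero (hRP : ∀ α ∈ D.R, α ∈ D.P)
    (hsP : ∀ α ∈ D.R, IsReflAction D α (sP α)) {γ : Vn n} (hγ : γ ∈ D.Rplus)
    (hm : ⟪D.hst, γ⟫ ≠ 0) {f g g' : GA D} (hg : IsDivDiff D γ (sP γ) f g)
    (hg' : IsDivDiff D (-reflVec D.hst γ) (sP (-reflVec D.hst γ)) (affineRefl D sP f) g') :
    affineRefl D sP g = affineRefl D sP f + (if γ = D.hst then f else 0) - g' := by
  have hs := hsP _ hst_mem_R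
  by_cases hθ : γ = D.hst
  · subst hθ
    rw [reflVec_self hst_ne_zero, neg_neg] at hg'
    have hy := hg.reflect hs hst_ne_zero hs (by rw [reflVec_self hst_ne_zero]; exact hs.neg)
      (hRP _ hst_mem_R)
    rw [reflVec_self hst_ne_zero] at hy
    have := hy.XP_self_mul_eq_of_neg hs (hRP _ hst_mem_R) hst_ne_zero hg'
    rw [if_pos rfl]
    rwa [hs.sOp_sOp_self hst_ne_zero] at this
  set δ := -reflVec D.hst γ with hδ_def
  have hδ : δ ∈ D.Rplus := neg_reflVec_hst_mem_Rplus hγ hm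
  have hδR := D.pos_sub hδ
  have hu := hsP δ hδR
  have hθγ : reflVec D.hst γ = -δ := (neg_neg _).symm
  have hy := hg.reflect hs hst_ne_zero (hsP γ (D.pos_sub hγ)) (by rw [hθγ]; exact hu.neg)
    (hRP γ (D.pos_sub hγ))
  rw [hθγ] at hy
  rw [if_neg hθ, add_zero]
  exact hy.XP_mul_eq_of_neg hu (hRP δ hδR) (D.root_ne_zero δ hδR) (hRP _ hst_mem_R)
    (reflVec_hst_of_inner_ne_zero hδ (neg_reflVec_hst_ne_hst hθ)
      (by rwa [hδ_def, inner_hst_neg_reflVec_hst])) hg'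

lemma sum_smul_affineRefl_divDiff (hRP : ∀ α ∈ D.R, α ∈ D.P)
    (hk : ∀ α ∈ D.R, ∀ β ∈ D.R, k (reflVec α β) = k β)
    (hsP : ∀ α ∈ D.R, IsReflAction D α (sP α)) (b : Vn n) {f : GA D} {g g' : Vn n → GA D}
    (hg : ∀ β ∈ D.Rplus, IsDivDiff D β (sP β) f (g β))
    (hg' : ∀ β ∈ D.Rplus, IsDivDiff D β (sP β) (affineRefl D sP f) (g' β)) :
    ∑ β ∈ D.Rplus, (k β * ((⟪b, β⟫ : ℝ) : ℂ)) • affineRefl D sP (g β) =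
      ∑ β ∈ D.Rplus, (k β * ((⟪reflVec D.hst b, β⟫ : ℝ) : ℂ)) • g' β +
        (∑ γ ∈ D.Rplus.filter (⟪D.hst, ·⟫ ≠ 0), k γ * ((⟪b, γ⟫ : ℝ) : ℂ)) •
          affineRefl D sP f +
        (k D.hst * ((⟪b, D.hst⟫ : ℝ) : ℂ)) • f := by
  have hθQ : D.hst ∈ D.Rplus.filter (⟪D.hst, ·⟫ ≠ 0) :=
    Finset.mem_filter.mpr ⟨D.theta_mem, inner_self_ne_zero.mpr hst_ne_zero⟩
  have hperp : ∀ γ ∈ D.Rplus.filter (¬⟪D.hst, ·⟫ ≠ 0),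
      (k γ * ((⟪b, γ⟫ : ℝ) : ℂ)) • affineRefl D sP (g γ) =
        (k γ * ((⟪reflVec D.hst b, γ⟫ : ℝ) : ℂ)) • g' γ := by
    intro γ hγ
    obtain ⟨hγ, hm⟩ := Finset.mem_filter.mp hγ
    rw [not_not] at hm
    rw [affineRefl_divDiff_of_inner_eq_zero hRP hsP (D.pos_sub hγ) hm (hg γ hγ) (hg' γ hγ),
      inner_reflVec_left, reflVec_of_inner_eq_zero ((real_inner_comm _ _).trans hm)]
  have hpaired : ∀ γ ∈ D.Rplus.filter (⟪D.hst, ·⟫ ≠ 0),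
      (k γ * ((⟪b, γ⟫ : ℝ) : ℂ)) • affineRefl D sP (g γ) =
        (k γ * ((⟪b, γ⟫ : ℝ) : ℂ)) • affineRefl D sP f +
          (if γ = D.hst then (k γ * ((⟪b, γ⟫ : ℝ) : ℂ)) • f else 0) +
          (k (-reflVec D.hst γ) * ((⟪reflVec D.hst b, -reflVec D.hst γ⟫ : ℝ) : ℂ)) •
            g' (-reflVec D.hst γ) := by
    intro γ hγQ
    obtain ⟨hγ, hm⟩ := Finset.mem_filter.mp hγQ
    rw [affineRefl_divDiff_of_inner_ne_zero hRP hsP hγ hm (hg γ hγ)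
        (hg' _ (neg_reflVec_hst_mem_Rplus hγ hm)),
      k_neg_reflVec hk hst_mem_R (D.pos_sub hγ), inner_neg_right,
      inner_reflVec_reflVec hst_ne_zero, Complex.ofReal_neg]
    split_ifs <;> module
  rw [← Finset.sum_filter_add_sum_filter_not D.Rplus (⟪D.hst, ·⟫ ≠ 0),
    Finset.sum_congr rfl hpaired, Finset.sum_congr rfl hperp, Finset.sum_add_distrib,
    Finset.sum_add_distrib, Finset.sum_ite_eq', if_pos hθQ, ← Finset.sum_smul,
    sum_comp_involution (fun γ => neg_reflVec_hst_mem_filter)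
      (fun γ _ => neg_reflVec_hst_neg_reflVec_hst γ)
      (fun γ => (k γ * ((⟪reflVec D.hst b, γ⟫ : ℝ) : ℂ)) • g' γ),
    ← Finset.sum_filter_add_sum_filter_not D.Rplus (⟪D.hst, ·⟫ ≠ 0)
      (fun β => (k β * ((⟪reflVec D.hst b, β⟫ : ℝ) : ℂ)) • g' β)]
  abel

theorem affineRefl_dunkl_sub (hRP : ∀ α ∈ D.R, α ∈ D.P)
    (hk : ∀ α ∈ D.R, ∀ β ∈ D.R, k (reflVec α β) = k β)
    (hsP : ∀ α ∈ D.R, IsReflAction D α (sP α)) {b : Vn n} {Db Dtb : GA D → GA D}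
    (hDb : IsTrigDunkl D k sP b Db) (hDtb : IsTrigDunkl D k sP (reflVec D.hst b) Dtb)
    (f : GA D) :
    affineRefl D sP (Db f) -
        (Dtb (affineRefl D sP f) + ((⟪b, D.hst⟫ : ℝ) : ℂ) • affineRefl D sP f) =
      (k D.hst * ((⟪b, D.hst⟫ : ℝ) : ℂ)) • f := by
  obtain ⟨g, hg, hDbf⟩ := IsTrigDunkl.exists_divDiff hDb f
  obtain ⟨g', hg', hDtbf⟩ := IsTrigDunkl.exists_divDiff hDtb (affineRefl D sP f)
  rw [hDbf, hDtbf, map_sub, map_add, map_sum, affineRefl_der hRP hsP]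
  simp only [map_smul]
  have hρ : innerRhoK D k (reflVec D.hst b) = innerRhoK D k b -
      ∑ γ ∈ D.Rplus.filter (⟪D.hst, ·⟫ ≠ 0), k γ * ((⟪b, γ⟫ : ℝ) : ℂ) := by
    rw [sum_filter_inner_hst_ne_zero hk b, sub_sub_cancel]
  rw [sum_smul_affineRefl_divDiff hRP hk hsP b hg hg', hρ]
  module

end Dunkl

end DegenerateDAHA

open DegenerateDAHA

theorem stmt_19_general {n : ℕ} (D : RootSystemData n)
    (hRP : ∀ α ∈ D.R, α ∈ D.P)
    (k : Vn n → ℂ)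
    (hk : ∀ α ∈ D.R, ∀ β ∈ D.R, k (reflVec α β) = k β)
    (sP : Vn n → ↥D.P → ↥D.P)
    (hsP : ∀ α ∈ D.R, ∀ b : ↥D.P, ((sP α b : Vn n)) = reflVec α ↑b)
    (b : Vn n)
    (Db : GA D → GA D) (hDb : IsTrigDunkl D k sP b Db) :
    (∀ i : Fin n, ∀ Dsb : GA D → GA D,
        IsTrigDunkl D k sP (reflVec (D.sroot i) b) Dsb →
        ∀ f : GA D,
          sOp D (sP (D.sroot i)) (Db f) - Dsb (sOp D (sP (D.sroot i)) f) =
            (-(k (D.sroot i) * ((⟪b, D.sroot i⟫ : ℝ) : ℂ))) • f) ∧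
      ∀ Dtb : GA D → GA D,
        IsTrigDunkl D k sP (reflVec D.hst b) Dtb →
        ∀ f : GA D,
          XP D D.hst * sOp D (sP D.hst) (Db f) -
              (Dtb (XP D D.hst * sOp D (sP D.hst) f) +
                ((⟪b, D.hst⟫ : ℝ) : ℂ) • (XP D D.hst * sOp D (sP D.hst) f)) =
            (k D.hst * ((⟪b, D.hst⟫ : ℝ) : ℂ)) • f :=
  ⟨fun i _ hDsb f => sOp_sroot_dunkl_sub hRP hk hsP i hDb hDsb f,
    fun _ hDtb f => affineRefl_dunkl_sub hRP hk hsP hDb hDtb f⟩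

/-- the defining cross-relations of the degenerate (graded) double affine
Hecke algebra hold in the polynomial representation `ℂ[P]`:
(i) `s_i ∘ 𝒟_b − 𝒟_{s_i(b)} ∘ s_i = −k_{α_i}·(b, α_i)·id` for `1 ≤ i ≤ n`;
(ii) with `s_0^x(f) = X_θ·s_θ(f)` (where `θ` is the highest short root, `(θ,θ) = 2`),
`s_0^x ∘ 𝒟_b − (𝒟_{s_θ(b)} + (b,θ)·id) ∘ s_0^x = k_θ·(b,θ)·id`. -/
theorem stmt_19 {n : ℕ} (D : RootSystemData n)
    (hRP : ∀ α ∈ D.R, α ∈ D.P)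
    (hnorm : ⟪D.hst, D.hst⟫ = (2 : ℝ))
    (k : Vn n → ℂ)
    (hk : ∀ α ∈ D.R, ∀ β ∈ D.R, k (reflVec α β) = k β)
    (sP : Vn n → ↥D.P → ↥D.P)
    (hsP : ∀ α ∈ D.R, ∀ b : ↥D.P, ((sP α b : Vn n)) = reflVec α ↑b)
    (b : Vn n) (hb : b ∈ D.P)
    (Db : GA D → GA D) (hDb : IsTrigDunkl D k sP b Db) :
    (∀ i : Fin n, ∀ Dsb : GA D → GA D,
        IsTrigDunkl D k sP (reflVec (D.sroot i) b) Dsb →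
        ∀ f : GA D,
          sOp D (sP (D.sroot i)) (Db f) - Dsb (sOp D (sP (D.sroot i)) f) =
            (-(k (D.sroot i) * ((⟪b, D.sroot i⟫ : ℝ) : ℂ))) • f) ∧
      ∀ Dtb : GA D → GA D,
        IsTrigDunkl D k sP (reflVec D.hst b) Dtb →
        ∀ f : GA D,
          XP D D.hst * sOp D (sP D.hst) (Db f) -
              (Dtb (XP D D.hst * sOp D (sP D.hst) f) +
                ((⟪b, D.hst⟫ : ℝ) : ℂ) • (XP D D.hst * sOp D (sP D.hst) f)) =
            (k D.hst * ((⟪b, D.hst⟫ : ℝ) : ℂ)) • f :=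
  stmt_19_general D hRP k hk sP hsP b Db hDb
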